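/- arXiv:1706.09298 — 6 statements merged into one kernel-verified Lean document; each statement's English description precedes it below -/
import Mathlib

section
/- Let (λ_k)_{k≥1} be a positive strictly decreasing sequence tending to 0 and (a_k)_{k≥1} positive reals with ∑ a_k λ_k < ∞. Then the function g(μ) = ∑_{k=1}^∞ a_k λ_k/(λ_k − μ), defined for μ ∈ (λ_{n+1}, λ_n), is continuous on each such interval, tends to −∞ as μ ↘ λ_{n+1} and to +∞ as μ ↗ λ_n, and hence has at least one zero in each interval (λ_{n+1}, λ_n). -/
/-!
Once `μ` stays `δ/2`-close to a point at distance at least `δ` from every pole `lam k`, the terms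
`w k / (lam k - μ)` are dominated by `2‖w k‖/δ`; so the series converges locally uniformly away from
the poles and is continuous there. Removing the `i`-th term leaves a series of that kind near
`lam i`, so the sum is `w i / (lam i - μ)` plus a function continuous at `lam i`, and for `w i > 0`
it tends to `+∞` from the left and to `-∞` from the right. The intermediate value theorem on the
interval between consecutive poles then yields the zero.
-/

open Filter Topology Set

section PoleSeries

variable {ι : Type*} {w lam : ι → ℝ} {δ μ₀ μ : ℝ}

lemma half_le_abs_sub_of_le_abs_sub {l : ℝ} (h : δ ≤ |l - μ₀|) (hμ : |μ - μ₀| ≤ δ / 2) :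
    δ / 2 ≤ |l - μ| := by
  have := abs_sub_abs_le_abs_sub (l - μ₀) (μ - μ₀)
  rw [sub_sub_sub_cancel_right] at this
  linarith

lemma norm_div_sub_le_of_sep {k : ι} (hδ : 0 < δ) (hsep : w k ≠ 0 → δ ≤ |lam k - μ₀|)
    (hμ : |μ - μ₀| ≤ δ / 2) : ‖w k / (lam k - μ)‖ ≤ 2 / δ * ‖w k‖ := by
  rcases eq_or_ne (w k) 0 with hw | hw
  · simp [hw]
  have hgap := half_le_abs_sub_of_le_abs_sub (hsep hw) hμ
  rw [norm_div, Real.norm_eq_abs (lam k - μ), div_eq_inv_mul, mul_comm, mul_comm (2 / δ)]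
  gcongr
  rwa [inv_le_comm₀ (by linarith) (by positivity), inv_div]

lemma summable_div_sub_of_sep (hw : Summable w) (hδ : 0 < δ)
    (hsep : ∀ k, w k ≠ 0 → δ ≤ |lam k - μ₀|) (hμ : |μ - μ₀| ≤ δ / 2) :
    Summable fun k => w k / (lam k - μ) :=
  (hw.norm.mul_left _).of_norm_bounded fun _ => norm_div_sub_le_of_sep hδ (hsep _) hμ

lemma continuousAt_tsum_div_sub_of_sep (hw : Summable w) (hδ : 0 < δ)
    (hsep : ∀ k, w k ≠ 0 → δ ≤ |lam k - μ₀|) :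
    ContinuousAt (fun μ => ∑' k, w k / (lam k - μ)) μ₀ := by
  have hball : Metric.ball μ₀ (δ / 2) ∈ 𝓝 μ₀ := Metric.ball_mem_nhds _ (by positivity)
  refine (continuousOn_tsum (s := Metric.ball μ₀ (δ / 2)) (fun k => ?_)
    (hw.norm.mul_left (2 / δ)) fun k μ hμ =>
      norm_div_sub_le_of_sep hδ (hsep k) (le_of_lt hμ)).continuousAt hball
  rcases eq_or_ne (w k) 0 with hwk | hwk
  · simp only [hwk, zero_div]
    exact continuousOn_const
  refine continuousOn_const.div (continuousOn_const.sub continuousOn_id) fun μ hμ => ?_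
  have := half_le_abs_sub_of_le_abs_sub (hsep k hwk) (le_of_lt hμ)
  exact abs_pos.mp (by linarith)

lemma hasSum_div_sub_of_hasSum_update [DecidableEq ι] {i : ι} {r : ℝ}
    (h : HasSum (fun k => Function.update w i 0 k / (lam k - μ)) r) :
    HasSum (fun k => w k / (lam k - μ)) (w i / (lam i - μ) + r) := by
  convert (hasSum_ite_eq i (w i / (lam i - μ))).add h using 1
  funext k
  rcases eq_or_ne k i with rfl | hk <;> simp [*]

lemma tendsto_const_div_sub_nhdsLT {c p : ℝ} (hc : 0 < c) :
    Tendsto (fun μ => c / (p - μ)) (𝓝[<] p) atTop := by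
  have : Tendsto (fun μ => p - μ) (𝓝[<] p) (𝓝[>] 0) := by
    refine tendsto_nhdsWithin_of_tendsto_nhds_of_eventually_within _ ?_ ?_
    · simpa using ((continuous_sub_left p).tendsto p).mono_left nhdsWithin_le_nhds
    · filter_upwards [self_mem_nhdsWithin] with μ hμ
      simpa using hμ
  exact this.inv_tendsto_nhdsGT_zero.const_mul_atTop hc

lemma tendsto_const_div_sub_nhdsGT {c p : ℝ} (hc : 0 < c) :
    Tendsto (fun μ => c / (p - μ)) (𝓝[>] p) atBot := by
  have : Tendsto (fun μ => μ - p) (𝓝[>] p) (𝓝[>] 0) := by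
    refine tendsto_nhdsWithin_of_tendsto_nhds_of_eventually_within _ ?_ ?_
    · simpa using ((continuous_sub_right p).tendsto p).mono_left nhdsWithin_le_nhds
    · filter_upwards [self_mem_nhdsWithin] with μ hμ
      simpa using hμ
  refine tendsto_neg_atTop_atBot.comp (this.inv_tendsto_nhdsGT_zero.const_mul_atTop hc) |>.congr
    fun μ => ?_
  simp only [Function.comp_apply, Pi.inv_apply]
  rw [← neg_sub μ p, div_neg, div_eq_mul_inv]

lemma exists_tsum_div_sub_eventuallyEq_add_continuousAt (hw : Summable w) {i : ι} (hδ : 0 < δ)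
    (hsep : ∀ k ≠ i, δ ≤ |lam k - lam i|) :
    ∃ R : ℝ → ℝ, ContinuousAt R (lam i) ∧
      (fun μ => ∑' k, w k / (lam k - μ)) =ᶠ[𝓝 (lam i)] fun μ => w i / (lam i - μ) + R μ := by
  classical
  set w' := Function.update w i 0
  have hsep' : ∀ k, w' k ≠ 0 → δ ≤ |lam k - lam i| := fun k hk =>
    hsep k (by rintro rfl; simp [w'] at hk)
  refine ⟨fun μ => ∑' k, w' k / (lam k - μ),
    continuousAt_tsum_div_sub_of_sep (hw.update i 0) hδ hsep', ?_⟩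
  filter_upwards [Metric.closedBall_mem_nhds (lam i) (half_pos hδ)] with μ hμ
  exact (hasSum_div_sub_of_hasSum_update
    (summable_div_sub_of_sep (hw.update i 0) hδ hsep' hμ).hasSum).tsum_eq

lemma tendsto_tsum_div_sub_nhdsLT (hw : Summable w) {i : ι} (hi : 0 < w i) (hδ : 0 < δ)
    (hsep : ∀ k ≠ i, δ ≤ |lam k - lam i|) :
    Tendsto (fun μ => ∑' k, w k / (lam k - μ)) (𝓝[<] (lam i)) atTop := by
  obtain ⟨R, hR, hsplit⟩ := exists_tsum_div_sub_eventuallyEq_add_continuousAt hw hδ hsep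
  exact ((tendsto_const_div_sub_nhdsLT hi).atTop_add (hR.tendsto.mono_left nhdsWithin_le_nhds)).congr'
    (hsplit.filter_mono nhdsWithin_le_nhds).symm

lemma tendsto_tsum_div_sub_nhdsGT (hw : Summable w) {i : ι} (hi : 0 < w i) (hδ : 0 < δ)
    (hsep : ∀ k ≠ i, δ ≤ |lam k - lam i|) :
    Tendsto (fun μ => ∑' k, w k / (lam k - μ)) (𝓝[>] (lam i)) atBot := by
  obtain ⟨R, hR, hsplit⟩ := exists_tsum_div_sub_eventuallyEq_add_continuousAt hw hδ hsep
  exact ((tendsto_const_div_sub_nhdsGT hi).atBot_add (hR.tendsto.mono_left nhdsWithin_le_nhds)).congr'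
    (hsplit.filter_mono nhdsWithin_le_nhds).symm

end PoleSeries

lemma StrictAnti.exists_pos_le_abs_sub {lam : ℕ → ℝ} (h : StrictAnti lam) (n : ℕ) :
    ∃ δ > 0, ∀ k ≠ n, δ ≤ |lam k - lam n| := by
  have hright : ∀ k, n < k → lam n - lam (n + 1) ≤ |lam k - lam n| := fun k hk => by
    have := h.antitone (Nat.succ_le_of_lt hk)
    rw [abs_sub_comm, abs_of_pos (sub_pos.2 (h hk))]
    linarith
  cases n with
  | zero =>
    exact ⟨_, sub_pos.2 (h Nat.one_pos), fun k hk => hright k (Nat.pos_of_ne_zero hk)⟩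
  | succ m =>
    refine ⟨min (lam m - lam (m + 1)) (lam (m + 1) - lam (m + 2)),
      lt_min (sub_pos.2 (h m.lt_succ_self)) (sub_pos.2 (h (m + 1).lt_succ_self)), fun k hk => ?_⟩
    rcases Nat.lt_or_gt_of_ne hk with hk | hk
    · have := h.antitone (Nat.le_of_lt_succ hk)
      rw [abs_of_pos (sub_pos.2 (h hk))]
      exact (min_le_left _ _).trans (by linarith)
    · exact (min_le_right _ _).trans (hright k hk)

lemma Antitone.min_sub_le_abs_sub {lam : ℕ → ℝ} (h : Antitone lam) {n : ℕ} {μ : ℝ}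
    (hμ : μ ∈ Ioo (lam (n + 1)) (lam n)) (k : ℕ) :
    min (μ - lam (n + 1)) (lam n - μ) ≤ |lam k - μ| := by
  rcases le_or_gt k n with hk | hk
  · have := h hk
    rw [abs_of_pos (by linarith [hμ.2])]
    exact (min_le_right _ _).trans (by linarith)
  · have := h (Nat.succ_le_of_lt hk)
    rw [abs_sub_comm, abs_of_pos (by linarith [hμ.1])]
    exact (min_le_left _ _).trans (by linarith)

theorem bridge_eq_root_in_each_interval_general
    (lam a : ℕ → ℝ)
    (hpos : ∀ k, 0 < lam k)
    (hdec : StrictAnti lam)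
    (hapos : ∀ k, 0 < a k)
    (hsum : Summable (fun k => a k * lam k))
    (g : ℝ → ℝ)
    (hg : ∀ μ, g μ = ∑' k, a k * lam k / (lam k - μ))
    (n : ℕ) :
    ContinuousOn g (Set.Ioo (lam (n+1)) (lam n)) ∧
    Tendsto g (nhdsWithin (lam (n+1)) (Set.Ioi (lam (n+1)))) atBot ∧
    Tendsto g (nhdsWithin (lam n) (Set.Iio (lam n))) atTop ∧
    ∃ μ ∈ Set.Ioo (lam (n+1)) (lam n), g μ = 0 := by
  have hg' : g = fun μ => ∑' k, a k * lam k / (lam k - μ) := funext hg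
  have hres : ∀ k, 0 < a k * lam k := fun k => mul_pos (hapos k) (hpos k)
  have hcont : ContinuousOn g (Ioo (lam (n + 1)) (lam n)) := fun μ hμ => by
    rw [hg']
    exact (continuousAt_tsum_div_sub_of_sep hsum (lt_min (sub_pos.2 hμ.1) (sub_pos.2 hμ.2))
      fun k _ => hdec.antitone.min_sub_le_abs_sub hμ k).continuousWithinAt
  have hbot : Tendsto g (𝓝[>] (lam (n + 1))) atBot := by
    obtain ⟨δ, hδ, hsep⟩ := hdec.exists_pos_le_abs_sub (n + 1)
    rw [hg']
    exact tendsto_tsum_div_sub_nhdsGT hsum (hres _) hδ hsep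
  have htop : Tendsto g (𝓝[<] (lam n)) atTop := by
    obtain ⟨δ, hδ, hsep⟩ := hdec.exists_pos_le_abs_sub n
    rw [hg']
    exact tendsto_tsum_div_sub_nhdsLT hsum (hres _) hδ hsep
  have hlt : lam (n + 1) < lam n := hdec n.lt_succ_self
  obtain ⟨μ, hμ, hzero⟩ := isPreconnected_Ioo.intermediate_value_Iii
    (le_principal_iff.2 (Ioo_mem_nhdsGT hlt)) (le_principal_iff.2 (Ioo_mem_nhdsLT hlt))
    hcont hbot htop (mem_univ 0)
  exact ⟨hcont, hbot, htop, μ, hμ, hzero⟩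

theorem bridge_eq_root_in_each_interval
    (lam a : ℕ → ℝ)
    (hpos : ∀ k, 0 < lam k)
    (hdec : StrictAnti lam)
    (hlim : Tendsto lam atTop (nhds 0))
    (hapos : ∀ k, 0 < a k)
    (hsum : Summable (fun k => a k * lam k))
    (g : ℝ → ℝ)
    (hg : ∀ μ, g μ = ∑' k, a k * lam k / (lam k - μ))
    (n : ℕ) :
    ContinuousOn g (Set.Ioo (lam (n+1)) (lam n)) ∧
    Tendsto g (nhdsWithin (lam (n+1)) (Set.Ioi (lam (n+1)))) atBot ∧
    Tendsto g (nhdsWithin (lam n) (Set.Iio (lam n))) atTop ∧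
    ∃ μ ∈ Set.Ioo (lam (n+1)) (lam n), g μ = 0 :=
  bridge_eq_root_in_each_interval_general lam a hpos hdec hapos hsum g hg n
end

section
/- For H ∈ (1/2, 1), the real part of (1/i)∫₀^∞ dτ/((iτ)^{2H+1} − 1) (principal branch of the power) equals (π/(2H+1)) · ℓ_H, where ℓ_H = sin((π/2)·(H−1/2)/(H+1/2)) / sin((π/2)·1/(H+1/2)). -/
/-!
Put `a = 2H + 1 ∈ (2, 3)` and `w = e^{iφ}` with `φ = π(1 - a/2) ∈ (-π/2, π/2)`. Then
`(iτ)^a = -w⁻¹ τ^a`, so the integrand is `-w (τ^a + w)⁻¹`, and the substitution `u = τ^a` turns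
the integral into `a⁻¹` times the Mellin transform
`∫₀^∞ u^{s-1} (u + w)⁻¹ du = π / sin (πs) · w^{s-1}` at `s = 1/a`. For `w = 1` this is the Beta integral `B(s, 1 - s)`, for `w > 0` it follows by
scaling, and it extends to `Re w > 0` by analytic continuation. Altogether
`(1/i) ∫ = (π/a) e^{iπ/a} / sin (π/a)`, whose real part is `(π/a) cot (π/a)`, and
`ℓ_H = cot (π/a)` since `(π/2)(H - 1/2)/(H + 1/2) = π/2 - π/a`.
-/

open Real MeasureTheory Complex Set Filter Topology

theorem integrableOn_rpow_mul_inv_add_pow {σ c : ℝ} {n : ℕ} (hσ : 0 < σ) (hσn : σ < n)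
    (hc : 0 < c) : IntegrableOn (fun u : ℝ => u ^ (σ - 1) * ((u + c) ^ n)⁻¹) (Ioi 0) := by
  refine mellin_convergent_of_isBigO_scalar (b := 0) ?_ ?_ hσn ?_ hσ
  · refine ContinuousOn.locallyIntegrableOn ?_ measurableSet_Ioi
    exact ContinuousOn.inv₀ (by fun_prop) fun u (hu : 0 < u) => by positivity
  · refine Asymptotics.IsBigO.of_bound 1 ?_
    filter_upwards [eventually_gt_atTop 0] with u hu
    rw [one_mul, Real.norm_of_nonneg (by positivity), Real.norm_of_nonneg (by positivity),
      Real.rpow_neg hu.le, Real.rpow_natCast]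
    exact inv_anti₀ (by positivity) (pow_le_pow_left₀ hu.le (by linarith) n)
  · refine Asymptotics.IsBigO.of_bound (c ^ n)⁻¹ ?_
    filter_upwards [self_mem_nhdsWithin] with u (hu : 0 < u)
    rw [neg_zero, Real.rpow_zero, norm_one, mul_one, Real.norm_of_nonneg (by positivity)]
    exact inv_anti₀ (by positivity) (pow_le_pow_left₀ hc.le (by linarith) n)

theorem norm_cpow_mul_inv_ofReal_add_pow_le {s z : ℂ} {u δ : ℝ} (hu : 0 < u) (hδ : 0 < δ)
    (hδz : δ ≤ z.re) (n : ℕ) :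
    ‖(u : ℂ) ^ (s - 1) * (((u : ℂ) + z) ^ n)⁻¹‖ ≤ u ^ (s.re - 1) * ((u + δ) ^ n)⁻¹ := by
  have hle : u + δ ≤ ‖(u : ℂ) + z‖ :=
    calc u + δ ≤ ((u : ℂ) + z).re := by simp only [add_re, ofReal_re]; linarith
      _ ≤ _ := re_le_norm _
  rw [norm_mul, norm_cpow_eq_rpow_re_of_pos hu, sub_re, one_re, norm_inv, norm_pow]
  gcongr

theorem mellinConvergent_inv_ofReal_add {s z : ℂ} (hs : 0 < s.re) (hs1 : s.re < 1)
    (hz : 0 < z.re) : MellinConvergent (fun u : ℝ => ((u : ℂ) + z)⁻¹) s := by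
  refine (integrableOn_rpow_mul_inv_add_pow (n := 1) hs (by simpa using hs1) hz).mono'
    (by fun_prop) ?_
  filter_upwards [ae_restrict_mem measurableSet_Ioi] with u (hu : 0 < u)
  simpa using norm_cpow_mul_inv_ofReal_add_pow_le (s := s) hu hz le_rfl 1

theorem half_re_le_re_of_mem_ball {z z₀ : ℂ} (hz : z ∈ Metric.ball z₀ (z₀.re / 2)) :
    z₀.re / 2 ≤ z.re := by
  have h := (abs_le.mp ((abs_re_le_norm (z - z₀)).trans (mem_ball_iff_norm.mp hz).le)).1
  rw [sub_re] at h
  linarith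

theorem differentiableOn_mellin_inv_ofReal_add {s : ℂ} (hs : 0 < s.re) (hs1 : s.re < 1) :
    DifferentiableOn ℂ (fun z => mellin (fun u : ℝ => ((u : ℂ) + z)⁻¹) s) {z | 0 < z.re} := by
  intro z₀ (hz₀ : 0 < z₀.re)
  have hδ : 0 < z₀.re / 2 := by positivity
  have hne {u : ℝ} {z : ℂ} (hu : 0 < u) (hz : 0 < z.re) : (u : ℂ) + z ≠ 0 := fun h => by
    have := congrArg re h
    simp only [add_re, ofReal_re, zero_re] at this
    linarith
  refine (hasDerivAt_integral_of_dominated_loc_of_deriv_le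
    (F := fun z (u : ℝ) => (u : ℂ) ^ (s - 1) • ((u : ℂ) + z)⁻¹)
    (F' := fun z (u : ℝ) => (u : ℂ) ^ (s - 1) • -(((u : ℂ) + z) ^ 2)⁻¹)
    (bound := fun u => u ^ (s.re - 1) * ((u + z₀.re / 2) ^ 2)⁻¹)
    (Metric.ball_mem_nhds z₀ hδ) (.of_forall fun _ => by fun_prop)
    (mellinConvergent_inv_ofReal_add hs hs1 hz₀) (by fun_prop) ?_
    (integrableOn_rpow_mul_inv_add_pow hs (by push_cast; linarith) hδ) ?_).2.differentiableAt
    |>.differentiableWithinAt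
  · filter_upwards [ae_restrict_mem measurableSet_Ioi] with u (hu : 0 < u) z hz
    simpa using norm_cpow_mul_inv_ofReal_add_pow_le hu hδ (half_re_le_re_of_mem_ball hz) 2
  · filter_upwards [ae_restrict_mem measurableSet_Ioi] with u (hu : 0 < u) z hz
    have hre : 0 < z.re := hδ.trans_le (half_re_le_re_of_mem_ball hz)
    simpa [div_eq_mul_inv, Pi.smul_def, Pi.inv_def] using
      (((hasDerivAt_id z).const_add (u : ℂ)).inv (hne hu hre)).const_smul ((u : ℂ) ^ (s - 1))

theorem image_div_one_add_Ioi : (fun u : ℝ => u / (1 + u)) '' Ioi 0 = Ioo 0 1 := by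
  ext t
  constructor
  · rintro ⟨u, hu : 0 < u, rfl⟩
    exact ⟨by positivity, (div_lt_one (by positivity)).mpr (by linarith)⟩
  · rintro ⟨ht0, ht1⟩
    refine ⟨t / (1 - t), div_pos ht0 (by linarith), ?_⟩
    field_simp
    ring

theorem mellin_inv_ofReal_add_one {s : ℂ} (hs : 0 < s.re) (hs1 : s.re < 1) :
    mellin (fun u : ℝ => ((u : ℂ) + 1)⁻¹) s = π / Complex.sin (π * s) := by
  have hbeta : betaIntegral s (1 - s) = π / Complex.sin (π * s) := by
    have h := Gamma_mul_Gamma_eq_betaIntegral hs (show 0 < (1 - s).re by simpa)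
    rwa [add_sub_cancel, Complex.Gamma_one, one_mul, Complex.Gamma_mul_Gamma_one_sub, eq_comm] at h
  have hderiv (u : ℝ) (hu : u ∈ Ioi 0) :
      HasDerivWithinAt (fun u : ℝ => u / (1 + u)) (((1 + u) ^ 2)⁻¹) (Ioi 0) u := by
    have hu : 0 < 1 + u := by simp only [mem_Ioi] at hu; linarith
    exact ((hasDerivAt_id' u).fun_div ((hasDerivAt_id' u).const_add 1)
      hu.ne').hasDerivWithinAt.congr_deriv (by ring)
  have hinj : InjOn (fun u : ℝ => u / (1 + u)) (Ioi 0) := by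
    intro x (hx : 0 < x) y (hy : 0 < y) h
    field_simp at h
    linarith
  rw [← hbeta, betaIntegral, intervalIntegral.integral_of_le zero_le_one,
    integral_Ioc_eq_integral_Ioo, ← image_div_one_add_Ioi,
    integral_image_eq_integral_abs_deriv_smul measurableSet_Ioi hderiv hinj, mellin]
  refine setIntegral_congr_fun measurableSet_Ioi fun u (hu : 0 < u) => ?_
  have h1u : 0 < 1 + u := by linarith
  have h1u' : ((1 + u : ℝ) : ℂ) ≠ 0 := ofReal_ne_zero.mpr h1u.ne'
  have hsub : (1 : ℂ) - ((u / (1 + u) : ℝ) : ℂ) = (((1 + u)⁻¹ : ℝ) : ℂ) := by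
    push_cast at h1u' ⊢
    field_simp
    ring
  rw [hsub, ofReal_div, ofReal_inv, div_cpow_ofReal_nonneg hu.le h1u.le,
    inv_cpow_ofReal_nonneg h1u.le, abs_of_pos (by positivity), real_smul, smul_eq_mul]
  have hpow : ((1 + u : ℝ) : ℂ) ^ (s - 1) * ((1 + u : ℝ) : ℂ) ^ (1 - s - 1) =
      ((1 + u : ℝ) : ℂ)⁻¹ := by
    rw [← cpow_add _ _ h1u', ← cpow_neg_one]
    ring_nf
  rw [div_mul_eq_mul_div, div_eq_mul_inv, mul_assoc, ← mul_inv, mul_comm (_ ^ (1 - s - 1)), hpow]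
  push_cast at h1u' ⊢
  rw [inv_inv, add_comm (u : ℂ) 1]
  field_simp

theorem mellin_inv_ofReal_add_ofReal {s : ℂ} (hs : 0 < s.re) (hs1 : s.re < 1) {x : ℝ}
    (hx : 0 < x) :
    mellin (fun u : ℝ => ((u : ℂ) + x)⁻¹) s = π / Complex.sin (π * s) * (x : ℂ) ^ (s - 1) := by
  have hx' : (x : ℂ) ≠ 0 := ofReal_ne_zero.mpr hx.ne'
  have hscale : (fun u : ℝ => ((u : ℂ) + x)⁻¹) =
      fun u : ℝ => (x : ℂ)⁻¹ • (((x⁻¹ * u : ℝ) : ℂ) + 1)⁻¹ := by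
    ext u
    rw [smul_eq_mul]
    push_cast
    field_simp
  rw [hscale, mellin_const_smul,
    mellin_comp_mul_left (fun v : ℝ => ((v : ℂ) + 1)⁻¹) s (inv_pos.mpr hx),
    mellin_inv_ofReal_add_one hs hs1, ofReal_inv, inv_cpow_ofReal_nonneg hx.le, cpow_neg,
    inv_inv, cpow_sub _ _ hx', cpow_one, smul_eq_mul, smul_eq_mul]
  ring

theorem mellin_inv_ofReal_add {s z : ℂ} (hs : 0 < s.re) (hs1 : s.re < 1) (hz : 0 < z.re) :
    mellin (fun u : ℝ => ((u : ℂ) + z)⁻¹) s = π / Complex.sin (π * s) * z ^ (s - 1) := by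
  have hU : IsOpen {w : ℂ | 0 < w.re} := isOpen_lt continuous_const continuous_re
  have hrhs : DifferentiableOn ℂ (fun w : ℂ => π / Complex.sin (π * s) * w ^ (s - 1))
      {w | 0 < w.re} := fun w (hw : 0 < w.re) =>
    ((differentiableAt_id.cpow_const (Or.inl hw)).const_mul _).differentiableWithinAt
  have hreal : ∀ᶠ x : ℝ in 𝓝[≠] 1,
      mellin (fun u : ℝ => ((u : ℂ) + x)⁻¹) s = π / Complex.sin (π * s) * (x : ℂ) ^ (s - 1) := by
    filter_upwards [nhdsWithin_le_nhds (eventually_gt_nhds one_pos)] with x hx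
    exact mellin_inv_ofReal_add_ofReal hs hs1 hx
  have hofReal : Tendsto ((↑) : ℝ → ℂ) (𝓝[≠] 1) (𝓝[≠] 1) := by
    have := continuous_ofReal.continuousWithinAt.tendsto_nhdsWithin (x := (1 : ℝ))
      (s := {(1 : ℝ)}ᶜ) (t := {(1 : ℂ)}ᶜ) fun x hx => by simpa using hx
    rwa [ofReal_one] at this
  exact ((differentiableOn_mellin_inv_ofReal_add hs hs1).analyticOnNhd hU)
    |>.eqOn_of_preconnected_of_frequently_eq (hrhs.analyticOnNhd hU) (convex_halfSpace_re_gt 0).isPreconnected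
    (show (0 : ℝ) < (1 : ℂ).re by simp) (hofReal.frequently hreal.frequently) hz

theorem ofReal_mul_cpow {r : ℝ} (hr : 0 < r) {x : ℂ} (hx : x ≠ 0) (w : ℂ) :
    ((r : ℂ) * x) ^ w = (r : ℂ) ^ w * x ^ w := by
  rw [cpow_def_of_ne_zero (mul_ne_zero (ofReal_ne_zero.mpr hr.ne') hx), log_ofReal_mul hr hx,
    cpow_def_of_ne_zero (ofReal_ne_zero.mpr hr.ne'), cpow_def_of_ne_zero hx, ofReal_log hr.le,
    add_mul, Complex.exp_add]

theorem exp_ofReal_mul_I_cpow {φ : ℝ} (h₁ : -π < φ) (h₂ : φ ≤ π) (w : ℂ) :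
    Complex.exp (φ * I) ^ w = Complex.exp (φ * w * I) := by
  rw [cpow_def_of_ne_zero (Complex.exp_ne_zero _), log_exp (by simpa) (by simpa)]
  ring_nf

theorem inv_I_mul_ofReal_cpow_sub_one {τ : ℝ} (hτ : 0 < τ) (a : ℝ) :
    ((I * τ) ^ (a : ℂ) - 1)⁻¹ = -Complex.exp ((π * (1 - a / 2) : ℝ) * I) *
      (((τ ^ a : ℝ) : ℂ) + Complex.exp ((π * (1 - a / 2) : ℝ) * I))⁻¹ := by
  have hIpow : I ^ (a : ℂ) = -(Complex.exp ((π * (1 - a / 2) : ℝ) * I))⁻¹ := by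
    conv_lhs => rw [← exp_pi_div_two_mul_I, ← ofReal_ofNat, ← ofReal_div]
    rw [exp_ofReal_mul_I_cpow (by linarith [pi_pos]) (by linarith [pi_pos]), neg_eq_neg_one_mul,
      ← exp_pi_mul_I, ← Complex.exp_neg, ← Complex.exp_add]
    congr 1
    push_cast
    ring
  set w := Complex.exp ((π * (1 - a / 2) : ℝ) * I)
  have hw : w ≠ 0 := Complex.exp_ne_zero _
  rw [mul_comm, ofReal_mul_cpow hτ I_ne_zero, hIpow, ← ofReal_cpow hτ.le,
    show ((τ ^ a : ℝ) : ℂ) * -w⁻¹ - 1 = -w⁻¹ * (((τ ^ a : ℝ) : ℂ) + w) by field_simp; ring,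
    mul_inv, inv_neg, inv_inv]

theorem integral_inv_ofReal_rpow_add {a : ℝ} (ha : 1 < a) {z : ℂ} (hz : 0 < z.re) :
    ∫ τ in Ioi (0 : ℝ), (((τ ^ a : ℝ) : ℂ) + z)⁻¹ =
      π / a / Complex.sin (π / a) * z ^ (1 / a - 1 : ℂ) := by
  have ha0 : 0 < a := by linarith
  have hre : (1 / a : ℂ).re = 1 / a := by norm_cast
  have hmellin : ∫ τ in Ioi (0 : ℝ), (((τ ^ a : ℝ) : ℂ) + z)⁻¹ =
      mellin (fun τ : ℝ => (((τ ^ a : ℝ) : ℂ) + z)⁻¹) 1 := by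
    simp only [mellin, sub_self, cpow_zero, one_smul]
  rw [hmellin, mellin_comp_rpow (fun u : ℝ => ((u : ℂ) + z)⁻¹),
    mellin_inv_ofReal_add (by rw [hre]; positivity)
      (by rw [hre, div_lt_one ha0]; exact ha) hz, abs_of_pos ha0, real_smul]
  push_cast
  ring_nf

theorem integral_inv_I_mul_ofReal_cpow_sub_one {a : ℝ} (ha1 : 1 < a) (ha3 : a < 3) :
    ∫ τ in Ioi (0 : ℝ), ((I * τ) ^ (a : ℂ) - 1)⁻¹ =
      I * (π / a) * Complex.exp (π / a * I) / Complex.sin (π / a) := by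
  have ha0 : (a : ℂ) ≠ 0 := ofReal_ne_zero.mpr (by linarith)
  set φ : ℝ := π * (1 - a / 2)
  have hφ₁ : -(π / 2) < φ := by simp only [φ]; nlinarith [pi_pos]
  have hφ₂ : φ < π / 2 := by simp only [φ]; nlinarith [pi_pos]
  have hw : 0 < (Complex.exp (φ * I)).re := by
    rw [exp_ofReal_mul_I_re]
    exact cos_pos_of_mem_Ioo ⟨hφ₁, hφ₂⟩
  have hphase : Complex.exp (φ * I) * Complex.exp (φ * I) ^ (1 / a - 1 : ℂ) =
      -I * Complex.exp (π / a * I) := by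
    rw [exp_ofReal_mul_I_cpow (by linarith [pi_pos]) (by linarith [pi_pos]), ← Complex.exp_add,
      ← exp_neg_pi_div_two_mul_I, ← Complex.exp_add]
    congr 1
    simp only [φ]
    push_cast
    field_simp
    ring
  rw [setIntegral_congr_fun measurableSet_Ioi fun τ hτ => inv_I_mul_ofReal_cpow_sub_one hτ a,
    integral_const_mul, integral_inv_ofReal_rpow_add ha1 hw]
  linear_combination (-(π / a / Complex.sin (π / a))) * hphase

theorem re_inv_I_mul_integral_inv_I_mul_ofReal_cpow_sub_one {a : ℝ} (ha1 : 1 < a) (ha3 : a < 3) :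
    (I⁻¹ * ∫ τ in Ioi (0 : ℝ), ((I * τ) ^ (a : ℂ) - 1)⁻¹).re =
      π / a * (Real.cos (π / a) / Real.sin (π / a)) := by
  rw [integral_inv_I_mul_ofReal_cpow_sub_one ha1 ha3, ← ofReal_div, exp_mul_I, ← ofReal_cos,
    ← ofReal_sin, mul_div_assoc, mul_assoc, inv_mul_cancel_left₀ I_ne_zero, re_ofReal_mul,
    div_ofReal_re]
  simp only [add_re, ofReal_re, mul_re, I_re, I_im, ofReal_im]
  ring

theorem real_part_integral (H : ℝ) (hH : H ∈ Set.Ioo (1/2 : ℝ) 1) :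
    ((Complex.I)⁻¹ * ∫ τ in Set.Ioi (0:ℝ),
        ((Complex.I * (τ : ℂ)) ^ ((2*H+1 : ℝ) : ℂ) - 1)⁻¹).re =
      (π / (2*H+1)) *
        (Real.sin ((π/2) * (H - 1/2) / (H + 1/2)) / Real.sin ((π/2) * (1 / (H + 1/2)))) := by
  obtain ⟨hH₁, hH₂⟩ := hH
  have hnumer : (π / 2) * (H - 1 / 2) / (H + 1 / 2) = π / 2 - π / (2 * H + 1) := by
    field_simp
    ring
  have hdenom : (π / 2) * (1 / (H + 1 / 2)) = π / (2 * H + 1) := by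
    field_simp
  rw [re_inv_I_mul_integral_inv_I_mul_ofReal_cpow_sub_one (by linarith) (by linarith), hnumer,
    hdenom, Real.sin_pi_div_two_sub]
end

section
/- Let H ∈ (0,1), γ ∈ (−3/4, −1/2). The function g^a(μ) = ∑_{k=1}^∞ (2H+1)/((k+γ)^{2H+1} − μ^{2H+1}) is strictly increasing on each interval (k+γ, k+1+γ) (k ≥ 1), with derivative g^a{}'(μ) = ∑_{k=1}^∞ (2H+1)² μ^{2H} / ((k+γ)^{2H+1} − μ^{2H+1})², and has exactly one root in each interval (k+γ, k+1+γ). -/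
/-!
Put `p = 2H + 1`, `λ k = (k + 1 + γ) ^ p` and `F t = ∑ₖ (λ k - t)⁻¹`, so that `g μ = p * F (μ ^ p)`
and `μ ↦ μ ^ p` maps `(n + γ, n + 1 + γ)` increasingly onto `(λ (n - 1), λ n)`. Since `p > 1`,
`∑ 1 / λ k` converges, hence so do `F` and the termwise derivative, locally uniformly away from the
poles. Between two consecutive poles every term of `F` is increasing, so `F` is strictly increasing,
and `F t - F s` dominates the increase of the single term with a pole at either end: this forces
`F → -∞` at the left pole and `F → +∞` at the right one, so `F` has exactly one zero in between.
-/

open Real Set Filter Topology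

lemma inv_sub_lt_inv_sub {c s t : ℝ} (hst : s < t) (hc : c ∉ Icc s t) :
    (c - s)⁻¹ < (c - t)⁻¹ := by
  rcases not_and_or.1 hc with hcs | hct
  · exact (inv_lt_inv_of_neg (by linarith) (by linarith)).2 (by linarith)
  · exact (inv_lt_inv₀ (by linarith) (by linarith)).2 (by linarith)

lemma inv_sub_le_inv_sub {c s t : ℝ} (hst : s ≤ t) (hc : c ∉ Icc s t) :
    (c - s)⁻¹ ≤ (c - t)⁻¹ := by
  rcases hst.eq_or_lt with rfl | hst
  · rfl
  · exact (inv_sub_lt_inv_sub hst hc).le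

lemma inv_sub_sq_le {c s t x : ℝ} (hx : x ∈ Icc s t) (hc : c ∉ Icc s t) :
    ((c - x) ^ 2)⁻¹ ≤ ((c - s) ^ 2)⁻¹ + ((c - t) ^ 2)⁻¹ := by
  rcases not_and_or.1 hc with hcs | hct
  · have : ((c - x) ^ 2)⁻¹ ≤ ((c - s) ^ 2)⁻¹ :=
      inv_anti₀ (by nlinarith) (by nlinarith [hx.1])
    linarith [inv_nonneg.2 (sq_nonneg (c - t))]
  · have : ((c - x) ^ 2)⁻¹ ≤ ((c - t) ^ 2)⁻¹ :=
      inv_anti₀ (by nlinarith) (by nlinarith [hx.2])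
    linarith [inv_nonneg.2 (sq_nonneg (c - s))]

lemma tendsto_inv_sub_nhdsGT (c : ℝ) : Tendsto (fun s => (c - s)⁻¹) (𝓝[>] c) atBot := by
  refine tendsto_inv_nhdsLT_zero.comp (tendsto_nhdsWithin_iff.2 ⟨?_, ?_⟩)
  · exact ((continuous_sub_left c).tendsto' c 0 (sub_self c)).mono_left nhdsWithin_le_nhds
  · filter_upwards [self_mem_nhdsWithin] with s (hs : c < s)
    exact sub_neg.2 hs

lemma tendsto_inv_sub_nhdsLT (c : ℝ) : Tendsto (fun s => (c - s)⁻¹) (𝓝[<] c) atTop := by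
  refine tendsto_inv_nhdsGT_zero.comp (tendsto_nhdsWithin_iff.2 ⟨?_, ?_⟩)
  · exact ((continuous_sub_left c).tendsto' c 0 (sub_self c)).mono_left nhdsWithin_le_nhds
  · filter_upwards [self_mem_nhdsWithin] with s (hs : s < c)
    exact sub_pos.2 hs

lemma hasDerivAt_inv_sub {c x : ℝ} (hx : c ≠ x) :
    HasDerivAt (fun y => (c - y)⁻¹) ((c - x) ^ 2)⁻¹ x := by
  simpa using ((hasDerivAt_id x).const_sub c).fun_inv (sub_ne_zero.2 hx)

noncomputable def secularFun (a : ℕ → ℝ) (t : ℝ) : ℝ := ∑' k, (a k - t)⁻¹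

section secularFun

variable {a : ℕ → ℝ}

lemma summable_inv_sub (htop : Tendsto a atTop atTop) (hs : Summable fun k => (a k)⁻¹) (t : ℝ) :
    Summable fun k => (a k - t)⁻¹ := by
  refine (hs.mul_left 2).of_norm_bounded_eventually_nat ?_
  filter_upwards [htop.eventually_ge_atTop (2 * |t| + 1)] with k hk
  have ht := le_abs_self t
  have hpos : 0 < a k - t := by linarith [abs_nonneg t]
  rw [Real.norm_eq_abs, abs_of_pos (inv_pos.2 hpos)]
  calc (a k - t)⁻¹ ≤ (a k / 2)⁻¹ := inv_anti₀ (by linarith [abs_nonneg t]) (by linarith)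
    _ = 2 * (a k)⁻¹ := by rw [inv_div, div_eq_mul_inv]

lemma summable_inv_sub_sq (htop : Tendsto a atTop atTop) (hs : Summable fun k => (a k)⁻¹)
    (t : ℝ) : Summable fun k => ((a k - t) ^ 2)⁻¹ := by
  refine (summable_inv_sub htop hs t).of_norm_bounded_eventually_nat ?_
  filter_upwards [htop.eventually_ge_atTop (t + 1)] with k hk
  rw [Real.norm_eq_abs, abs_of_nonneg (inv_nonneg.2 (sq_nonneg _))]
  exact inv_anti₀ (by linarith) (by nlinarith)

lemma StrictMono.notMem_Icc {m : ℕ} (ha : StrictMono a) {s t : ℝ}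
    (hs : s ∈ Ioo (a m) (a (m + 1))) (ht : t ∈ Ioo (a m) (a (m + 1))) (k : ℕ) :
    a k ∉ Icc s t := by
  rintro ⟨hsk, hkt⟩
  rcases le_or_gt k m with hk | hk
  · linarith [ha.monotone hk, hs.1]
  · linarith [ha.monotone (Nat.succ_le_of_lt hk), ht.2]

lemma strictMonoOn_secularFun (ha : StrictMono a) (htop : Tendsto a atTop atTop)
    (hs : Summable fun k => (a k)⁻¹) (m : ℕ) :
    StrictMonoOn (secularFun a) (Ioo (a m) (a (m + 1))) := fun s hs' t ht hst =>
  Summable.tsum_lt_tsum (i := m) (fun k => inv_sub_le_inv_sub hst.le (ha.notMem_Icc hs' ht k))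
    (inv_sub_lt_inv_sub hst (ha.notMem_Icc hs' ht m))
    (summable_inv_sub htop hs s) (summable_inv_sub htop hs t)

lemma inv_sub_sub_le_secularFun_sub (ha : StrictMono a) (htop : Tendsto a atTop atTop)
    (hs : Summable fun k => (a k)⁻¹) {m : ℕ} {s t : ℝ} (hs' : s ∈ Ioo (a m) (a (m + 1)))
    (ht : t ∈ Ioo (a m) (a (m + 1))) (hst : s ≤ t) (j : ℕ) :
    (a j - t)⁻¹ - (a j - s)⁻¹ ≤ secularFun a t - secularFun a s := by
  rw [secularFun, secularFun, ← (summable_inv_sub htop hs t).tsum_sub (summable_inv_sub htop hs s)]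
  exact ((summable_inv_sub htop hs t).sub (summable_inv_sub htop hs s)).le_tsum j
    fun k _ => sub_nonneg.2 (inv_sub_le_inv_sub hst (ha.notMem_Icc hs' ht k))

lemma tendsto_secularFun_nhdsGT (ha : StrictMono a) (htop : Tendsto a atTop atTop)
    (hs : Summable fun k => (a k)⁻¹) (m : ℕ) : Tendsto (secularFun a) (𝓝[>] a m) atBot := by
  obtain ⟨c, hc⟩ := exists_between (ha (Nat.lt_succ_self m))
  refine tendsto_atBot_mono' _ ?_
    (tendsto_atBot_add_const_left _ (secularFun a c - (a m - c)⁻¹) (tendsto_inv_sub_nhdsGT (a m)))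
  filter_upwards [Ioo_mem_nhdsGT hc.1] with s hs'
  have := inv_sub_sub_le_secularFun_sub ha htop hs ⟨hs'.1, hs'.2.trans hc.2⟩ hc hs'.2.le m
  linarith

lemma tendsto_secularFun_nhdsLT (ha : StrictMono a) (htop : Tendsto a atTop atTop)
    (hs : Summable fun k => (a k)⁻¹) (m : ℕ) :
    Tendsto (secularFun a) (𝓝[<] a (m + 1)) atTop := by
  obtain ⟨c, hc⟩ := exists_between (ha (Nat.lt_succ_self m))
  refine tendsto_atTop_mono' _ ?_ (tendsto_atTop_add_const_left _
    (secularFun a c - (a (m + 1) - c)⁻¹) (tendsto_inv_sub_nhdsLT (a (m + 1))))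
  filter_upwards [Ioo_mem_nhdsLT hc.2] with t ht
  have := inv_sub_sub_le_secularFun_sub ha htop hs hc ⟨hc.1.trans ht.1, ht.2⟩ ht.1.le (m + 1)
  linarith

lemma hasDerivAt_secularFun (ha : StrictMono a) (htop : Tendsto a atTop atTop)
    (hs : Summable fun k => (a k)⁻¹) {m : ℕ} {t : ℝ} (ht : t ∈ Ioo (a m) (a (m + 1))) :
    HasDerivAt (secularFun a) (∑' k, ((a k - t) ^ 2)⁻¹) t := by
  obtain ⟨s₁, hs₁⟩ := exists_between ht.1
  obtain ⟨s₂, hs₂⟩ := exists_between ht.2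
  have hpole : ∀ k, a k ∉ Icc s₁ s₂ :=
    ha.notMem_Icc ⟨hs₁.1, hs₁.2.trans ht.2⟩ ⟨ht.1.trans hs₂.1, hs₂.2⟩
  refine hasDerivAt_tsum_of_isPreconnected (g := fun k y => (a k - y)⁻¹)
    ((summable_inv_sub_sq htop hs s₁).add (summable_inv_sub_sq htop hs s₂))
    isOpen_Ioo isPreconnected_Ioo
    (fun k y hy => hasDerivAt_inv_sub fun h => hpole k (h ▸ Ioo_subset_Icc_self hy))
    (fun k y hy => ?_) ⟨hs₁.2, hs₂.1⟩ (summable_inv_sub htop hs t) ⟨hs₁.2, hs₂.1⟩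
  rw [Real.norm_of_nonneg (inv_nonneg.2 (sq_nonneg _))]
  exact inv_sub_sq_le (Ioo_subset_Icc_self hy) (hpole k)

lemma exists_secularFun_eq_zero (ha : StrictMono a) (htop : Tendsto a atTop atTop)
    (hs : Summable fun k => (a k)⁻¹) (m : ℕ) :
    ∃ t ∈ Ioo (a m) (a (m + 1)), secularFun a t = 0 := by
  have hlt := ha (Nat.lt_succ_self m)
  have hcont : ContinuousOn (secularFun a) (Ioo (a m) (a (m + 1))) := fun t ht =>
    (hasDerivAt_secularFun ha htop hs ht).continuousAt.continuousWithinAt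
  exact isPreconnected_Ioo.intermediate_value_Iii (le_principal_iff.2 (Ioo_mem_nhdsGT hlt))
    (le_principal_iff.2 (Ioo_mem_nhdsLT hlt)) hcont (tendsto_secularFun_nhdsGT ha htop hs m)
    (tendsto_secularFun_nhdsLT ha htop hs m) (mem_univ 0)

end secularFun

/-- The function `g^a` of the paper is `perturbedFun (fun k => k + 1 + γ) (2 * H + 1)`. -/
noncomputable def perturbedFun (b : ℕ → ℝ) (p μ : ℝ) : ℝ :=
  p * secularFun (fun k => b k ^ p) (μ ^ p)

section perturbedFun

variable {b : ℕ → ℝ} {p : ℝ}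

lemma StrictMono.rpow_of_pos (hb : StrictMono b) (hb0 : 0 < b 0) (hp : 0 < p) :
    StrictMono fun k => b k ^ p := fun i _ hij =>
  rpow_lt_rpow (hb0.le.trans (hb.monotone (Nat.zero_le i))) (hb hij) hp

lemma mapsTo_rpow_Ioo {x y : ℝ} (hx : 0 ≤ x) (hp : 0 < p) :
    MapsTo (· ^ p) (Ioo x y) (Ioo (x ^ p) (y ^ p)) := fun _ hμ =>
  ⟨rpow_lt_rpow hx hμ.1 hp, rpow_lt_rpow (hx.trans hμ.1.le) hμ.2 hp⟩

lemma strictMonoOn_perturbedFun (hb : StrictMono b) (hb0 : 0 < b 0) (hp : 0 < p)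
    (htop : Tendsto (fun k => b k ^ p) atTop atTop) (hs : Summable fun k => (b k ^ p)⁻¹)
    (m : ℕ) : StrictMonoOn (perturbedFun b p) (Ioo (b m) (b (m + 1))) := by
  have hbm : 0 ≤ b m := hb0.le.trans (hb.monotone (Nat.zero_le m))
  have hF := (strictMonoOn_secularFun (hb.rpow_of_pos hb0 hp) htop hs m).comp
    ((strictMonoOn_rpow_Ici_of_exponent_pos hp).mono fun μ hμ => hbm.trans hμ.1.le)
    (mapsTo_rpow_Ioo hbm hp)
  exact fun x hx y hy hxy => mul_lt_mul_of_pos_left (hF hx hy hxy) hp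

lemma hasDerivAt_perturbedFun (hb : StrictMono b) (hb0 : 0 < b 0) (hp : 0 < p)
    (htop : Tendsto (fun k => b k ^ p) atTop atTop) (hs : Summable fun k => (b k ^ p)⁻¹)
    {m : ℕ} {μ : ℝ} (hμ : μ ∈ Ioo (b m) (b (m + 1))) :
    HasDerivAt (perturbedFun b p) (∑' k, p ^ 2 * μ ^ (p - 1) / (b k ^ p - μ ^ p) ^ 2) μ := by
  have hbm : 0 ≤ b m := hb0.le.trans (hb.monotone (Nat.zero_le m))
  refine (((hasDerivAt_secularFun (hb.rpow_of_pos hb0 hp) htop hs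
    (mapsTo_rpow_Ioo hbm hp hμ)).comp μ
      (hasDerivAt_rpow_const (Or.inl (hbm.trans_lt hμ.1).ne'))).const_mul p).congr_deriv ?_
  rw [← tsum_mul_right, ← tsum_mul_left]
  congr 1 with k
  ring

lemma existsUnique_perturbedFun_eq_zero (hb : StrictMono b) (hb0 : 0 < b 0) (hp : 0 < p)
    (htop : Tendsto (fun k => b k ^ p) atTop atTop) (hs : Summable fun k => (b k ^ p)⁻¹)
    (m : ℕ) : ∃! μ, μ ∈ Ioo (b m) (b (m + 1)) ∧ perturbedFun b p μ = 0 := by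
  have hbm : 0 ≤ b m := hb0.le.trans (hb.monotone (Nat.zero_le m))
  obtain ⟨t, ht, hFt⟩ := exists_secularFun_eq_zero (hb.rpow_of_pos hb0 hp) htop hs m
  have ht0 : 0 ≤ t := (rpow_nonneg hbm p).trans ht.1.le
  have hmem : t ^ p⁻¹ ∈ Ioo (b m) (b (m + 1)) :=
    ⟨(lt_rpow_inv_iff_of_pos hbm ht0 hp).2 ht.1,
      (rpow_inv_lt_iff_of_pos ht0 (hbm.trans (hb.monotone m.le_succ)) hp).2 ht.2⟩
  have hzero : perturbedFun b p (t ^ p⁻¹) = 0 := by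
    rw [perturbedFun, rpow_inv_rpow ht0 hp.ne', hFt, mul_zero]
  refine ⟨t ^ p⁻¹, ⟨hmem, hzero⟩, fun μ ⟨hμ, hgμ⟩ => ?_⟩
  exact (strictMonoOn_perturbedFun hb hb0 hp htop hs m).injOn hμ hmem (hgμ.trans hzero.symm)

end perturbedFun

lemma tendsto_natCast_add_one_add_rpow_atTop (γ : ℝ) {p : ℝ} (hp : 0 < p) :
    Tendsto (fun k : ℕ => ((k : ℝ) + 1 + γ) ^ p) atTop atTop :=
  (tendsto_rpow_atTop hp).comp (tendsto_atTop_add_const_right _ γ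
    (tendsto_atTop_add_const_right _ 1 tendsto_natCast_atTop_atTop))

lemma summable_inv_natCast_add_one_add_rpow {γ p : ℝ} (hγ : -1 < γ) (hp : 1 < p) :
    Summable fun k : ℕ => (((k : ℝ) + 1 + γ) ^ p)⁻¹ := by
  refine ((Real.summable_one_div_nat_add_rpow (1 + γ) p).2 hp).congr fun k => ?_
  rw [abs_of_pos (by linarith [k.cast_nonneg (α := ℝ)] : (0 : ℝ) < k + (1 + γ)), one_div,
    add_assoc]

theorem perturbed_eq_monotone_root (H γ : ℝ)
    (hH : H ∈ Set.Ioo (0:ℝ) 1) (hγ : γ ∈ Set.Ioo (-3/4 : ℝ) (-1/2))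
    (g : ℝ → ℝ)
    (hg : ∀ μ, g μ = ∑' k : ℕ, (2*H+1) / (((k : ℝ) + 1 + γ) ^ (2*H+1) - μ ^ (2*H+1)))
    (n : ℕ) (hn : 1 ≤ n) :
    StrictMonoOn g (Ioo ((n : ℝ) + γ) ((n : ℝ) + 1 + γ)) ∧
    (∀ μ ∈ Ioo ((n : ℝ) + γ) ((n : ℝ) + 1 + γ),
      HasDerivAt g
        (∑' k : ℕ, (2*H+1) ^ 2 * μ ^ (2*H) /
          ((((k : ℝ) + 1 + γ) ^ (2*H+1) - μ ^ (2*H+1)) ^ 2)) μ) ∧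
    (∃! μ, μ ∈ Ioo ((n : ℝ) + γ) ((n : ℝ) + 1 + γ) ∧ g μ = 0) := by
  obtain ⟨hH0, -⟩ := hH
  obtain ⟨hγ0, -⟩ := hγ
  obtain ⟨m, rfl⟩ : ∃ m, n = m + 1 := ⟨n - 1, by omega⟩
  set b : ℕ → ℝ := fun k => (k : ℝ) + 1 + γ
  have hb : StrictMono b := fun i j hij => by simp only [b]; gcongr
  have hb0 : 0 < b 0 := by simp only [b]; norm_num; linarith
  have hp : 0 < 2 * H + 1 := by linarith
  have htop := tendsto_natCast_add_one_add_rpow_atTop γ hp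
  have hs := summable_inv_natCast_add_one_add_rpow (by linarith : -1 < γ) (by linarith : 1 < 2 * H + 1)
  have hg' : g = perturbedFun b (2 * H + 1) := funext fun μ => by
    rw [hg, perturbedFun, secularFun, ← tsum_mul_left]; simp only [div_eq_mul_inv, b]
  have hI : Ioo (((m + 1 : ℕ) : ℝ) + γ) ((m + 1 : ℕ) + 1 + γ) = Ioo (b m) (b (m + 1)) := by
    simp only [b]; push_cast; ring_nf
  rw [hg', hI]
  refine ⟨strictMonoOn_perturbedFun hb hb0 hp htop hs m, fun μ hμ => ?_,
    existsUnique_perturbedFun_eq_zero hb hb0 hp htop hs m⟩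
  simpa using hasDerivAt_perturbedFun hb hb0 hp htop hs hμ
end

section
/- For any μ ≥ 1 and H ∈ (0,1), the bound ∫₀^∞ 2e^{−2πt} / |(it/μ)^{2H+1} − 1| dt ≤ C holds for a constant C independent of μ, and the integral converges to 1/π as μ → ∞. -/
/-!
For `1 ≤ p ≤ 3` and `s ≥ 0` the point `(i s)^p` has argument `p π / 2 ∈ [π/2, 3π/2]`, hence
nonpositive real part, so `‖(i s)^p - 1‖ ≥ 1`. The integrand is therefore dominated by
`2 e^{-2πt}`, whose integral over `(0, ∞)` is `1/π`; and since `(i t / μ)^p → 0` as `μ → ∞`, it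
converges pointwise to `2 e^{-2πt}`, so dominated convergence gives the limit.
-/

open Real MeasureTheory Filter Topology Set

lemma Complex.one_le_norm_sub_one_of_re_nonpos {z : ℂ} (hz : z.re ≤ 0) : 1 ≤ ‖z - 1‖ :=
  calc (1 : ℝ) ≤ |(z - 1).re| := by
        rw [Complex.sub_re, Complex.one_re, abs_of_nonpos (by linarith)]; linarith
    _ ≤ ‖z - 1‖ := Complex.abs_re_le_norm _

lemma Complex.re_ofReal_mul_I_cpow_nonpos {s p : ℝ} (hs : 0 ≤ s) (hp₁ : 1 ≤ p) (hp₃ : p ≤ 3) :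
    (((s : ℂ) * Complex.I) ^ (p : ℂ)).re ≤ 0 := by
  rcases hs.eq_or_lt with rfl | hs
  · simp [Complex.zero_cpow (Complex.ofReal_ne_zero.mpr (by linarith : p ≠ 0))]
  · rw [Complex.cpow_ofReal_re, Complex.arg_real_mul _ hs, Complex.arg_I]
    exact mul_nonpos_of_nonneg_of_nonpos (by positivity)
      (cos_nonpos_of_pi_div_two_le_of_le (by nlinarith [pi_pos]) (by nlinarith [pi_pos]))

lemma one_le_norm_I_mul_div_cpow_sub_one {t μ p : ℝ} (ht : 0 ≤ t) (hμ : 0 ≤ μ)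
    (hp₁ : 1 ≤ p) (hp₃ : p ≤ 3) : 1 ≤ ‖(Complex.I * t / μ) ^ (p : ℂ) - 1‖ := by
  have hbase : Complex.I * t / μ = ((t / μ : ℝ) : ℂ) * Complex.I := by push_cast; ring
  rw [hbase]
  exact Complex.one_le_norm_sub_one_of_re_nonpos
    (Complex.re_ofReal_mul_I_cpow_nonpos (div_nonneg ht hμ) hp₁ hp₃)

lemma tendsto_I_mul_div_cpow_atTop {p : ℝ} (hp : 0 < p) (t : ℝ) :
    Tendsto (fun μ : ℝ => (Complex.I * t / μ) ^ (p : ℂ)) atTop (𝓝 0) := by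
  have hbase : Tendsto (fun μ : ℝ => Complex.I * t / μ) atTop (𝓝 0) := by
    simpa [div_eq_mul_inv] using (tendsto_inv_atTop_zero.ofReal).const_mul (Complex.I * t)
  have hcpow := Complex.continuousAt_cpow_const_of_re_pos (z := 0) (w := p) (by simp)
    (by simpa using hp)
  rw [ContinuousAt, Complex.zero_cpow (Complex.ofReal_ne_zero.mpr hp.ne')] at hcpow
  exact hcpow.comp hbase

section

variable {g : ℝ → ℝ} {p : ℝ}

lemma setIntegral_div_norm_I_mul_div_cpow_sub_one_le (hg : IntegrableOn g (Ioi 0))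
    (hg₀ : ∀ t ∈ Ioi 0, 0 ≤ g t) {μ : ℝ} (hμ : 0 ≤ μ) (hp₁ : 1 ≤ p) (hp₃ : p ≤ 3) :
    ∫ t in Ioi 0, g t / ‖(Complex.I * t / μ) ^ (p : ℂ) - 1‖ ≤ ∫ t in Ioi 0, g t := by
  refine integral_mono_of_nonneg ?_ hg ?_ <;>
    refine ae_restrict_of_forall_mem measurableSet_Ioi fun t ht => ?_
  · exact div_nonneg (hg₀ t ht) (norm_nonneg _)
  · exact div_le_self (hg₀ t ht) (one_le_norm_I_mul_div_cpow_sub_one (le_of_lt ht) hμ hp₁ hp₃)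

lemma tendsto_setIntegral_div_norm_I_mul_div_cpow_sub_one (hg : IntegrableOn g (Ioi 0))
    (hp₁ : 1 ≤ p) (hp₃ : p ≤ 3) :
    Tendsto (fun μ : ℝ => ∫ t in Ioi 0, g t / ‖(Complex.I * t / μ) ^ (p : ℂ) - 1‖) atTop
      (𝓝 (∫ t in Ioi 0, g t)) := by
  refine tendsto_integral_filter_of_dominated_convergence (fun t => ‖g t‖) ?_ ?_ hg.norm ?_
  · exact .of_forall fun μ =>
      hg.aestronglyMeasurable.div₀ (by fun_prop : Measurable _).aestronglyMeasurable
  · filter_upwards [eventually_ge_atTop 0] with μ hμ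
    refine ae_restrict_of_forall_mem measurableSet_Ioi fun t ht => ?_
    rw [norm_div, norm_norm]
    exact div_le_self (norm_nonneg _) (one_le_norm_I_mul_div_cpow_sub_one (le_of_lt ht) hμ hp₁ hp₃)
  · refine .of_forall fun t => ?_
    have hden : Tendsto (fun μ : ℝ => ‖(Complex.I * t / μ) ^ (p : ℂ) - 1‖) atTop (𝓝 1) := by
      simpa using ((tendsto_I_mul_div_cpow_atTop (by linarith) t).sub_const 1).norm
    simpa [Pi.div_def] using tendsto_const_nhds.div hden one_ne_zero

end

lemma integral_two_mul_exp_neg_two_pi_mul_Ioi :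
    ∫ t in Ioi (0 : ℝ), 2 * exp (-2 * π * t) = 1 / π := by
  rw [integral_const_mul, integral_exp_mul_Ioi (by linarith [pi_pos]) 0]
  field_simp
  simp

lemma integrableOn_two_mul_exp_neg_two_pi_mul_Ioi :
    IntegrableOn (fun t : ℝ => 2 * exp (-2 * π * t)) (Ioi 0) :=
  (integrableOn_exp_mul_Ioi (by linarith [pi_pos]) 0).const_mul 2

theorem residual_integral_bound (H : ℝ) (hH : H ∈ Set.Ioo (0:ℝ) 1) :
    (∃ C : ℝ, ∀ μ : ℝ, 1 ≤ μ →
      ∫ t in Set.Ioi (0:ℝ),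
        2 * Real.exp (-2 * π * t) /
          ‖(Complex.I * (t : ℂ) / (μ : ℂ)) ^ ((2*H+1 : ℝ) : ℂ) - 1‖ ≤ C) ∧
    Tendsto (fun μ : ℝ =>
      ∫ t in Set.Ioi (0:ℝ),
        2 * Real.exp (-2 * π * t) /
          ‖(Complex.I * (t : ℂ) / (μ : ℂ)) ^ ((2*H+1 : ℝ) : ℂ) - 1‖)
      atTop (nhds (1 / π)) := by
  have hp₁ : 1 ≤ 2 * H + 1 := by linarith [hH.1]
  have hp₃ : 2 * H + 1 ≤ 3 := by linarith [hH.2]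
  have hg := integrableOn_two_mul_exp_neg_two_pi_mul_Ioi
  rw [← integral_two_mul_exp_neg_two_pi_mul_Ioi]
  exact ⟨⟨_, fun μ hμ => setIntegral_div_norm_I_mul_div_cpow_sub_one_le hg
      (fun t _ => by positivity) (by linarith) hp₁ hp₃⟩,
    tendsto_setIntegral_div_norm_I_mul_div_cpow_sub_one hg hp₁ hp₃⟩
end

section
/- For H ∈ (0,1) and n → ∞, ∑_{k=1}^{n} (1/k) / ((n + a)^{2H+1} − (k + b)^{2H+1}) = O(n^{−2H−1} log n), for any fixed constants a > b ≥ −1 with b > −1 such that the denominators are positive for 1 ≤ k ≤ n. -/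
/-!
Put `x = n + a`, `y = k + b`, `c = a - b > 0` and `r = 2H ≥ 0`. Since `y ^ r ≤ x ^ r`, the
denominator satisfies `x ^ (r + 1) - y ^ (r + 1) ≥ x ^ r (x - y) = x ^ r (n - k + c)`.
Partial fractions split `1 / (k (n - k + c))` into `(1 / k + 1 / (n - k + c)) / (n + c)`, and
after the reflection `k ↦ n + 1 - k` both pieces are bounded by harmonic sums, i.e. by
`O(log n)`. Finally `(n + a) ^ (2H) ~ n ^ (2H)` and `n + c ~ n`.
-/

open Real Filter Asymptotics Finset

theorem rpow_mul_sub_le_rpow_add_one_sub {x y r : ℝ} (hy : 0 ≤ y) (hyx : y ≤ x) (hr : 0 ≤ r) :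
    x ^ r * (x - y) ≤ x ^ (r + 1) - y ^ (r + 1) := by
  have hr1 : r + 1 ≠ 0 := by linarith
  rw [rpow_add_one' (hy.trans hyx) hr1, rpow_add_one' hy hr1]
  have : y ^ r ≤ x ^ r := rpow_le_rpow hy hyx hr
  nlinarith

theorem sum_Icc_inv_sub_add_le {c : ℝ} (hc : 0 < c) (n : ℕ) :
    ∑ k ∈ Icc 1 n, ((n : ℝ) - k + c)⁻¹ ≤ (1 + c⁻¹) * ∑ k ∈ Icc 1 n, (k : ℝ)⁻¹ := by
  have reflect : ∑ k ∈ Icc 1 n, ((n : ℝ) - k + c)⁻¹ = ∑ k ∈ Icc 1 n, ((k : ℝ) - 1 + c)⁻¹ := by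
    refine sum_bij' (fun k _ => n + 1 - k) (fun k _ => n + 1 - k) ?_ ?_ ?_ ?_ ?_ <;>
      simp only [mem_Icc] <;> intro k hk
    any_goals omega
    rw [Nat.cast_sub (by omega)]
    push_cast
    ring
  rw [reflect, mul_sum]
  refine sum_le_sum fun k hk => ?_
  have hk : (1 : ℝ) ≤ k := by exact_mod_cast (mem_Icc.mp hk).1
  rw [inv_le_iff_one_le_mul₀' (by linarith)]
  field_simp
  nlinarith

theorem sum_Icc_inv_le_one_add_log (n : ℕ) : ∑ k ∈ Icc 1 n, (k : ℝ)⁻¹ ≤ 1 + log n := by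
  simpa [harmonic_eq_sum_Icc] using harmonic_le_one_add_log n

theorem isEquivalent_natCast_add (a : ℝ) :
    (fun n : ℕ => (n : ℝ) + a) ~[atTop] fun n => (n : ℝ) :=
  IsEquivalent.refl.add_isLittleO <| isLittleO_const_left.mpr <| Or.inr <|
    tendsto_norm_atTop_atTop.comp tendsto_natCast_atTop_atTop

theorem isBigO_one_add_log_natCast :
    (fun n : ℕ => 1 + log n) =O[atTop] fun n => log n :=
  (isLittleO_const_log_atTop.comp_tendsto tendsto_natCast_atTop_atTop).isBigO.add (isBigO_refl _ _)

section

variable {r a b : ℝ}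

theorem abs_div_rpow_sub_rpow_le (hr : 0 ≤ r) (hab : b < a) (hb : -1 < b) {n k : ℕ}
    (hk : k ∈ Icc 1 n) :
    |(1 / (k : ℝ)) / (((n : ℝ) + a) ^ (r + 1) - ((k : ℝ) + b) ^ (r + 1))| ≤
      (((n : ℝ) + a) ^ r)⁻¹ * ((n : ℝ) + (a - b))⁻¹ * ((k : ℝ)⁻¹ + ((n : ℝ) - k + (a - b))⁻¹) := by
  have hk1 : (1 : ℝ) ≤ k := by exact_mod_cast (mem_Icc.mp hk).1
  have hkn : (k : ℝ) ≤ n := by exact_mod_cast (mem_Icc.mp hk).2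
  have hgap : 0 < (n : ℝ) - k + (a - b) := by linarith
  have hlower : 0 < ((n : ℝ) + a) ^ r * ((n : ℝ) - k + (a - b)) :=
    mul_pos (rpow_pos_of_pos (by linarith) r) hgap
  have hden := rpow_mul_sub_le_rpow_add_one_sub (x := (n : ℝ) + a) (y := (k : ℝ) + b)
    (by linarith) (by linarith) hr
  rw [show (n : ℝ) + a - (k + b) = n - k + (a - b) by ring] at hden
  -- partial fractions: `1 / (k (n - k + c)) = (1 / k + 1 / (n - k + c)) / (n + c)`
  calc |(1 / (k : ℝ)) / (((n : ℝ) + a) ^ (r + 1) - ((k : ℝ) + b) ^ (r + 1))|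
      = (1 / (k : ℝ)) / (((n : ℝ) + a) ^ (r + 1) - ((k : ℝ) + b) ^ (r + 1)) :=
        abs_of_nonneg (div_nonneg (by positivity) (hlower.le.trans hden))
    _ ≤ (1 / (k : ℝ)) / (((n : ℝ) + a) ^ r * ((n : ℝ) - k + (a - b))) :=
        div_le_div_of_nonneg_left (by positivity) hlower hden
    _ = _ := by
        have : (n : ℝ) + (a - b) ≠ 0 := by linarith
        field_simp
        ring

theorem norm_sum_div_rpow_sub_rpow_le (hr : 0 ≤ r) (hab : b < a) (hb : -1 < b) (n : ℕ) :
    ‖∑ k ∈ Icc 1 n, (1 / (k : ℝ)) / (((n : ℝ) + a) ^ (r + 1) - ((k : ℝ) + b) ^ (r + 1))‖ ≤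
      (2 + (a - b)⁻¹) *
        ((((n : ℝ) + a) ^ r)⁻¹ * ((n : ℝ) + (a - b))⁻¹ * ∑ k ∈ Icc 1 n, (k : ℝ)⁻¹) := by
  calc _ ≤ ∑ k ∈ Icc 1 n,
          (((n : ℝ) + a) ^ r)⁻¹ * ((n : ℝ) + (a - b))⁻¹ * ((k : ℝ)⁻¹ + ((n : ℝ) - k + (a - b))⁻¹) :=
        (abs_sum_le_sum_abs _ _).trans (sum_le_sum fun k hk => abs_div_rpow_sub_rpow_le hr hab hb hk)
    _ = (((n : ℝ) + a) ^ r)⁻¹ * ((n : ℝ) + (a - b))⁻¹ *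
          (∑ k ∈ Icc 1 n, (k : ℝ)⁻¹ + ∑ k ∈ Icc 1 n, ((n : ℝ) - k + (a - b))⁻¹) := by
        rw [← mul_sum, sum_add_distrib]
    _ ≤ _ := by
        rcases n.eq_zero_or_pos with rfl | hn
        · simp
        have hn : (1 : ℝ) ≤ n := by exact_mod_cast hn
        have hX : 0 ≤ (((n : ℝ) + a) ^ r)⁻¹ * ((n : ℝ) + (a - b))⁻¹ := by
          have : 0 < (n : ℝ) + a := by linarith
          have : 0 < (n : ℝ) + (a - b) := by linarith
          positivity
        have := mul_le_mul_of_nonneg_left (sum_Icc_inv_sub_add_le (sub_pos.mpr hab) n) hX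
        linarith

end

theorem An_estimate (H a b : ℝ) (hH : H ∈ Set.Ioo (0:ℝ) 1)
    (hab : b < a) (hb : -1 < b) :
    (fun n : ℕ => ∑ k ∈ Finset.Icc 1 n,
        (1 / (k : ℝ)) / (((n : ℝ) + a) ^ (2*H+1) - ((k : ℝ) + b) ^ (2*H+1)))
      =O[atTop] (fun n : ℕ => (n : ℝ) ^ (-2*H-1) * Real.log n) := by
  have h2H : 0 ≤ 2 * H := by linarith [hH.1]
  have hS := isBigO_of_le' (l := atTop) (c := 2 + (a - b)⁻¹) fun n =>
    (norm_sum_div_rpow_sub_rpow_le h2H hab hb n).trans (by gcongr; exact le_norm_self _)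
  have hharmonic : (fun n : ℕ => ∑ k ∈ Icc 1 n, (k : ℝ)⁻¹) =O[atTop] fun n => log n :=
    (isBigO_of_le _ fun n => by
      rw [norm_of_nonneg (by positivity)]
      exact (sum_Icc_inv_le_one_add_log n).trans (le_norm_self _)).trans isBigO_one_add_log_natCast
  have hpow := ((isEquivalent_natCast_add a).rpow (fun n => Nat.cast_nonneg n) (r := 2 * H)).inv
  have hB := (hpow.isBigO.mul (isEquivalent_natCast_add (a - b)).inv.isBigO).mul hharmonic
  refine (hS.trans hB).congr_right fun n => ?_
  rw [rpow_sub' (Nat.cast_nonneg n) (by linarith), neg_mul, rpow_neg (Nat.cast_nonneg n), rpow_one]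
  simp [div_eq_mul_inv]
end

section
/- For H ∈ (0,1) and fixed reals a > b with k + b > 0 for k ≥ 1, the tail sum ∑_{k=n+1}^∞ k^{2H−1} / ((k + b)^{2H+1} − (n + a)^{2H+1})² = O(n^{−2H−1}) as n → ∞, provided k + b > n + a for all k ≥ n+1 and n large. -/
open Real Filter Asymptotics

/-!
Write `y = n + a`, `c = 1 + b - a > 0` and `p = 2H + 1`; the `j`-th denominator is
`((y + j + c) ^ p - y ^ p) ^ 2`. The tangent-line bound for the convex function `x ^ p` gives
`(y + j + c) ^ p - y ^ p ≥ p y ^ (2H) (j + c)`, and `y ≥ n / 2` for large `n`, while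
`(n + 1 + j) ^ (2H - 1) ≤ n ^ (2H - 1) (j + 2) ^ |2H - 1|`. So the `j`-th term is at most a
constant times `n ^ (-2H - 1) (j + 2) ^ |2H - 1| / (j + c) ^ 2`, which is summable in `j` since
`|2H - 1| < 1`.
-/

lemma mul_rpow_sub_one_mul_sub_le_rpow_sub_rpow {x y p : ℝ} (hy : 0 < y) (hyx : y ≤ x)
    (hp : 1 ≤ p) : p * y ^ (p - 1) * (x - y) ≤ x ^ p - y ^ p := by
  have hbernoulli := one_add_mul_self_le_rpow_one_add (s := (x - y) / y)
    (by linarith [div_nonneg (sub_nonneg.2 hyx) hy.le]) hp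
  rw [show 1 + (x - y) / y = x / y by field_simp; ring, div_rpow (hy.le.trans hyx) hy.le,
    le_div_iff₀ (rpow_pos_of_pos hy p)] at hbernoulli
  rw [rpow_sub_one hy.ne']
  linarith [show (1 + p * ((x - y) / y)) * y ^ p = y ^ p + p * (y ^ p / y) * (x - y) by ring]

lemma rpow_add_le_rpow_mul_one_add_rpow_abs (q : ℝ) {u v : ℝ} (hu : 1 ≤ u) (hv : 0 ≤ v) :
    (u + v) ^ q ≤ u ^ q * (1 + v) ^ |q| := by
  rcases le_or_gt 0 q with hq | hq
  · rw [abs_of_nonneg hq, ← mul_rpow (by linarith) (by linarith)]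
    exact rpow_le_rpow (by linarith) (by nlinarith) hq
  · calc (u + v) ^ q ≤ u ^ q := rpow_le_rpow_of_nonpos (by linarith) (by linarith) hq.le
      _ ≤ u ^ q * (1 + v) ^ |q| :=
        le_mul_of_one_le_right (by positivity) (one_le_rpow (by linarith) (abs_nonneg q))

lemma summable_nat_add_rpow_div_nat_add_sq {m s c : ℝ} (hm : m < 1) (hs : 0 < s) (hc : 0 < c) :
    Summable fun j : ℕ => ((j : ℝ) + s) ^ m / ((j : ℝ) + c) ^ 2 := by
  set K := 1 + s / c
  have hK0 : 0 < K := by positivity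
  have hmajorant := ((summable_one_div_nat_add_rpow s (2 - m)).2 (by linarith)).mul_left (K ^ 2)
  refine hmajorant.of_nonneg_of_le (fun j => by positivity) fun j => ?_
  have hjs : 0 < (j : ℝ) + s := by positivity
  have hK : (j : ℝ) + s ≤ K * ((j : ℝ) + c) := by
    have : K * ((j : ℝ) + c) - ((j : ℝ) + s) = c + s * j / c := by
      simp only [K]; field_simp; ring
    linarith [show 0 ≤ c + s * j / c by positivity]
  calc ((j : ℝ) + s) ^ m / ((j : ℝ) + c) ^ 2
        = ((j : ℝ) + s) ^ m * K ^ 2 / (K * ((j : ℝ) + c)) ^ 2 := by field_simp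
    _ ≤ ((j : ℝ) + s) ^ m * K ^ 2 / ((j : ℝ) + s) ^ 2 :=
        div_le_div_of_nonneg_left (by positivity) (by positivity) (pow_le_pow_left₀ hjs.le hK 2)
    _ = K ^ 2 * (1 / |(j : ℝ) + s| ^ (2 - m)) := by
        rw [abs_of_pos hjs, rpow_sub hjs, rpow_two]; field_simp

lemma isBigO_tsum_of_le_mul {α ι : Type*} {l : Filter α} {f : α → ι → ℝ} {u : α → ℝ}
    {g : ι → ℝ} (hg : Summable g) (hf₀ : ∀ n j, 0 ≤ f n j)
    (hf : ∀ᶠ n in l, ∀ j, f n j ≤ u n * g j) :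
    (fun n => ∑' j, f n j) =O[l] u := by
  refine IsBigO.of_bound |∑' j, g j| ?_
  filter_upwards [hf] with n hn
  have hsum : ∑' j, f n j ≤ u n * ∑' j, g j := by
    rw [← tsum_mul_left]
    exact ((hg.mul_left (u n)).of_nonneg_of_le (hf₀ n) hn).tsum_le_tsum hn (hg.mul_left _)
  rw [norm_of_nonneg (tsum_nonneg (hf₀ n)), norm_eq_abs, mul_comm, ← abs_mul]
  exact hsum.trans (le_abs_self _)

lemma rpow_div_sq_rpow_sub_rpow_le {H a b n : ℝ} (hH : 0 < H) (ha : a < b + 1) (hn : 1 ≤ n)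
    (hna : n / 2 ≤ n + a) (j : ℕ) :
    (n + 1 + j) ^ (2 * H - 1) / ((n + 1 + j + b) ^ (2 * H + 1) - (n + a) ^ (2 * H + 1)) ^ 2 ≤
      n ^ (-2 * H - 1) * ((2 ^ (2 * H) / (2 * H + 1)) ^ 2 *
        (((j : ℝ) + 2) ^ |2 * H - 1| / ((j : ℝ) + (1 + b - a)) ^ 2)) := by
  set p := 2 * H + 1
  set d := (j : ℝ) + (1 + b - a)
  have hd : 0 < d := add_pos_of_nonneg_of_pos j.cast_nonneg (by linarith)
  have hy : 0 < n + a := by linarith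
  have hnum : (n + 1 + j) ^ (2 * H - 1) ≤ n ^ (2 * H - 1) * ((j : ℝ) + 2) ^ |2 * H - 1| := by
    rw [add_assoc n, show (j : ℝ) + 2 = 1 + (1 + j) by ring]
    exact rpow_add_le_rpow_mul_one_add_rpow_abs _ hn (by positivity)
  have hden : p * (n / 2) ^ (2 * H) * d ≤ (n + 1 + j + b) ^ p - (n + a) ^ p := by
    have := mul_rpow_sub_one_mul_sub_le_rpow_sub_rpow hy (by linarith : n + a ≤ n + a + d)
      (by linarith : 1 ≤ p)
    rw [show p - 1 = 2 * H by ring, show n + a + d = n + 1 + j + b by ring,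
      show n + 1 + j + b - (n + a) = d by ring] at this
    exact le_trans (by gcongr) this
  have hn0 : 0 < n := by linarith
  have hpow : n ^ (-2 * H - 1) * (n ^ (2 * H)) ^ 2 = n ^ (2 * H - 1) := by
    rw [sq, ← rpow_add hn0, ← rpow_add hn0]; ring_nf
  calc (n + 1 + j) ^ (2 * H - 1) / ((n + 1 + j + b) ^ p - (n + a) ^ p) ^ 2
      ≤ n ^ (2 * H - 1) * ((j : ℝ) + 2) ^ |2 * H - 1| / (p * (n / 2) ^ (2 * H) * d) ^ 2 := by
        gcongr
    _ = _ := by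
        rw [div_rpow hn0.le zero_le_two, ← hpow]
        field_simp

theorem Qn_estimate_general (H a b : ℝ) (hH : H ∈ Set.Ioo (0:ℝ) 1)
    (ha : a < b + 1) :
    (fun n : ℕ => ∑' j : ℕ,
        ((n : ℝ) + 1 + j) ^ (2*H-1) /
          ((((n : ℝ) + 1 + j + b) ^ (2*H+1) - ((n : ℝ) + a) ^ (2*H+1)) ^ 2))
      =O[atTop] (fun n : ℕ => (n : ℝ) ^ (-2*H-1)) := by
  obtain ⟨hH0, hH1⟩ := hH
  have hsummable := (summable_nat_add_rpow_div_nat_add_sq (m := |2 * H - 1|)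
    (abs_sub_lt_iff.2 ⟨by linarith, by linarith⟩) two_pos (by linarith : 0 < 1 + b - a)
    ).mul_left ((2 ^ (2 * H) / (2 * H + 1)) ^ 2)
  refine isBigO_tsum_of_le_mul hsummable (fun n j => by positivity) ?_
  filter_upwards [eventually_ge_atTop 1,
    tendsto_natCast_atTop_atTop.eventually_ge_atTop (-2 * a)] with n hn hna j
  exact rpow_div_sq_rpow_sub_rpow_le hH0 ha (by exact_mod_cast hn) (by linarith) j

theorem Qn_estimate (H a b : ℝ) (hH : H ∈ Set.Ioo (0:ℝ) 1)
    (hab : b < a) (hb : ∀ k : ℕ, 1 ≤ k → 0 < (k : ℝ) + b)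
    (ha : a < b + 1) :
    (fun n : ℕ => ∑' j : ℕ,
        ((n : ℝ) + 1 + j) ^ (2*H-1) /
          ((((n : ℝ) + 1 + j + b) ^ (2*H+1) - ((n : ℝ) + a) ^ (2*H+1)) ^ 2))
      =O[atTop] (fun n : ℕ => (n : ℝ) ^ (-2*H-1)) :=
  Qn_estimate_general H a b hH ha
end
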